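/- Let H be a 2-regular class 2 graph whose shortest odd cycle has length m. Then cms(H) ≤ (m−1)·|E(H)|/(2m). -/

import Mathlib

open SimpleGraph

/-- Two edges are adjacent if they are distinct and share a vertex. -/
def EdgesAdj {V : Type*} (e e' : Sym2 V) : Prop :=
  e ≠ e' ∧ ∃ v : V, v ∈ e ∧ v ∈ e'

/-- `ms` of an ordering of a graph, the ordering being given as the list of edges
in increasing label order: the largest `s ∈ {1,…,m}` such that any ordered pair of
adjacent edges `(e,e')` with `ℓ(e) < ℓ(e')` has forward distance at least `s`. -/
noncomputable def msList {V : Type*} (L : List (Sym2 V)) : ℕ :=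
  sSup {s | 1 ≤ s ∧ s ≤ L.length ∧ ∀ i j e e', i < j →
    L[i]? = some e → L[j]? = some e' → EdgesAdj e e' → s ≤ j - i}

/-- `cms` of an ordering of a graph: the largest `s ∈ {1,…,m}` such that every pair of
adjacent edges is at cyclic distance at least `s`. -/
noncomputable def cmsList {V : Type*} (L : List (Sym2 V)) : ℕ :=
  sSup {s | 1 ≤ s ∧ s ≤ L.length ∧ ∀ i j e e', i < j →
    L[i]? = some e → L[j]? = some e' → EdgesAdj e e' →
    s ≤ min (j - i) (L.length - (j - i))}

/-- `L` is an ordering of `G`: it lists every edge of `G` exactly once. -/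
def IsOrdering {V : Type*} (G : SimpleGraph V) (L : List (Sym2 V)) : Prop :=
  L.Nodup ∧ ∀ e, e ∈ L ↔ e ∈ G.edgeSet

/-- Cyclic matching sequenceability of a graph: the maximum of `cmsList` over orderings. -/
noncomputable def cms {V : Type*} (G : SimpleGraph V) : ℕ :=
  sSup {k | ∃ L, IsOrdering G L ∧ cmsList L = k}

/-- Number of edges of a graph. -/
noncomputable def numEdges {V : Type*} (G : SimpleGraph V) : ℕ :=
  Nat.card G.edgeSet

/-- The chromatic index: the least number of colours in a proper edge colouring. -/
noncomputable def chromaticIndex {V : Type*} (G : SimpleGraph V) : ℕ :=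
  sInf {c | ∃ f : G.edgeSet → Fin c, ∀ e e' : G.edgeSet, EdgesAdj e.1 e'.1 → f e ≠ f e'}

/-- The edge set of `G` forms a matching (no two distinct edges share a vertex). -/
def IsMatchingGraph {V : Type*} (G : SimpleGraph V) : Prop :=
  ∀ e ∈ G.edgeSet, ∀ e' ∈ G.edgeSet, ¬ EdgesAdj e e'

/-- `G` is regular of degree `d`. -/
def IsRegularGraph {V : Type*} (G : SimpleGraph V) (d : ℕ) : Prop :=
  ∀ v : V, Nat.card (G.neighborSet v) = d

/-- A finite set of edges of `G` forming a matching. -/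
def IsMatchingSet {V : Type*} (G : SimpleGraph V) (M : Finset (Sym2 V)) : Prop :=
  ↑M ⊆ G.edgeSet ∧ ∀ e ∈ M, ∀ e' ∈ M, ¬ EdgesAdj e e'

/-- The matching number of a graph. -/
noncomputable def matchingNumber {V : Type*} (G : SimpleGraph V) : ℕ :=
  sSup {k | ∃ M : Finset (Sym2 V), IsMatchingSet G M ∧ M.card = k}

/-!
Fix an odd cycle `C` of length `m` and an ordering of `H` with cyclic separation `s`.  Any
`s` cyclically consecutive positions carry pairwise non-adjacent edges, and a matching inside
an odd cycle of length `m` has at most `(m - 1) / 2` edges.  Each edge of `C` lies in exactly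
`s` of the `|E(H)|` cyclic windows of length `s`, so double counting gives
`s * m ≤ |E(H)| * (m - 1) / 2`.
-/

section

open Finset

variable {V : Type*}

theorem EdgesAdj.symm {e e' : Sym2 V} (h : EdgesAdj e e') : EdgesAdj e' e :=
  ⟨h.1.symm, h.2.imp fun _ hv => hv.symm⟩

theorem two_mul_card_le_card_of_pairwise_not_edgesAdj [DecidableEq V] {M : Finset (Sym2 V)}
    {T : Finset V} (hMT : ∀ e ∈ M, e.toFinset ⊆ T) (hdiag : ∀ e ∈ M, ¬ e.IsDiag)
    (hM : ∀ e ∈ M, ∀ e' ∈ M, ¬ EdgesAdj e e') : 2 * #M ≤ #T := by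
  have hdisj : (M : Set (Sym2 V)).PairwiseDisjoint Sym2.toFinset := by
    intro e he e' he' hne
    refine Finset.disjoint_left.2 fun v hv hv' => hM e he e' he' ⟨hne, v, ?_, ?_⟩
    · exact Sym2.mem_toFinset.1 hv
    · exact Sym2.mem_toFinset.1 hv'
  calc 2 * #M = ∑ e ∈ M, #e.toFinset := by
        rw [sum_congr rfl fun e he => Sym2.card_toFinset_of_not_isDiag e (hdiag e he),
          sum_const, smul_eq_mul, mul_comm]
    _ = #(M.biUnion Sym2.toFinset) := (card_biUnion hdisj).symm
    _ ≤ #T := card_le_card (biUnion_subset.2 hMT)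

theorem SimpleGraph.Walk.IsCycle.two_mul_card_le_length {G : SimpleGraph V} {v : V}
    {w : G.Walk v v} (hw : w.IsCycle) {M : Finset (Sym2 V)} (hMw : ∀ e ∈ M, e ∈ w.edges)
    (hM : ∀ e ∈ M, ∀ e' ∈ M, ¬ EdgesAdj e e') : 2 * #M ≤ w.length := by
  classical
  have hT : #w.support.tail.toFinset = w.length := by
    rw [List.toFinset_card_of_nodup hw.support_nodup, List.length_tail, w.length_support,
      Nat.add_sub_cancel]
  refine hT ▸ two_mul_card_le_card_of_pairwise_not_edgesAdj (fun e he x hx => ?_)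
    (fun e he => G.not_isDiag_of_mem_edgeSet (w.edges_subset_edgeSet (hMw e he))) hM
  rw [List.mem_toFinset]
  rcases w.mem_support_iff.1 (w.mem_support_of_mem_edges (hMw e he) (Sym2.mem_toFinset.1 hx))
    with rfl | hx
  · exact w.end_mem_tail_support hw.not_nil
  · exact hx

namespace Fin

variable {n : ℕ} [NeZero n]

-- `(i - t).val < s` says that `i` lies in the cyclic window `{t, t + 1, …, t + s - 1}`.
theorem card_filter_sub_val_lt {s : ℕ} (hs : s ≤ n) (i : Fin n) :
    #{t : Fin n | (i - t).val < s} = s :=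
  calc #{t : Fin n | (i - t).val < s} = #{k : Fin n | k.val < s} :=
        card_equiv (Equiv.subLeft i) (by simp)
    _ = s := Fin.card_filter_val_lt.trans (min_eq_right hs)

theorem sum_card_filter_sub_val_lt {s : ℕ} (hs : s ≤ n) (P : Finset (Fin n)) :
    ∑ t : Fin n, #{i ∈ P | (i - t).val < s} = #P * s :=
  calc ∑ t : Fin n, #{i ∈ P | (i - t).val < s}
        = ∑ i ∈ P, #{t : Fin n | (i - t).val < s} := by
          simp only [card_filter]
          exact sum_comm
    _ = #P * s := by
          rw [sum_congr rfl fun i _ => card_filter_sub_val_lt hs i, Finset.sum_const, smul_eq_mul]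

theorem min_sub_lt_of_sub_val_lt {i j t : Fin n} {s : ℕ} (hij : i < j) (hi : (i - t).val < s)
    (hj : (j - t).val < s) : min (j.val - i.val) (n - (j.val - i.val)) < s := by
  have hji : (j - i).val = j.val - i.val := Fin.coe_sub_iff_le.2 hij.le
  rw [← sub_sub_sub_cancel_right j i t] at hji
  have := (j - t).isLt
  rcases le_or_gt (i - t) (j - t) with h | h
  · rw [Fin.coe_sub_iff_le.2 h] at hji
    omega
  · rw [Fin.coe_sub_iff_lt.2 h] at hji
    omega

end Fin

theorem not_edgesAdj_get_of_sub_val_lt {L : List (Sym2 V)} {s : ℕ}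
    (hs : ∀ i j e e', i < j → L[i]? = some e → L[j]? = some e' → EdgesAdj e e' →
      s ≤ min (j - i) (L.length - (j - i)))
    [NeZero L.length] {i j t : Fin L.length} (hi : (i - t).val < s) (hj : (j - t).val < s) :
    ¬ EdgesAdj (L.get i) (L.get j) := by
  wlog hij : i < j generalizing i j
  · rcases (not_lt.1 hij).lt_or_eq with hji | rfl
    · exact fun h => this hj hi hji h.symm
    · exact fun h => h.1 rfl
  intro hadj
  have := hs i j _ _ hij (by simp) (by simp) hadj
  exact (Fin.min_sub_lt_of_sub_val_lt hij hi hj).not_ge this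

theorem IsOrdering.length_eq_numEdges {G : SimpleGraph V} {L : List (Sym2 V)}
    (hL : IsOrdering G L) : L.length = numEdges G := by
  classical
  have hE : G.edgeSet = ↑L.toFinset := by
    ext e
    simp [hL.2 e]
  rw [numEdges, hE, Nat.card_coe_set_eq, Set.ncard_coe_finset, List.toFinset_card_of_nodup hL.1]

theorem IsOrdering.card_filter_get_mem {G : SimpleGraph V} {L : List (Sym2 V)}
    (hL : IsOrdering G L) [DecidableEq V] {C : Finset (Sym2 V)} (hC : ↑C ⊆ G.edgeSet) :
    #{i : Fin L.length | L.get i ∈ C} = #C := by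
  rw [← card_image_of_injective _ (List.nodup_iff_injective_get.1 hL.1)]
  congr 1
  ext e
  simp only [mem_image, mem_filter, mem_univ, true_and]
  refine ⟨fun ⟨i, hi, hie⟩ => hie ▸ hi, fun he => ?_⟩
  obtain ⟨i, hi⟩ := List.mem_iff_get.1 ((hL.2 e).2 (hC he))
  exact ⟨i, hi ▸ he, hi⟩

theorem cmsList_le_of_isCycle {G : SimpleGraph V} {L : List (Sym2 V)} (hL : IsOrdering G L)
    {v : V} {w : G.Walk v v} (hw : w.IsCycle) (hodd : Odd w.length) :
    cmsList L ≤ (w.length - 1) * L.length / (2 * w.length) := by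
  classical
  refine csSup_le' fun s ⟨hs1, hsn, hs⟩ => ?_
  have : NeZero L.length := ⟨by omega⟩
  rw [Nat.le_div_iff_mul_le (by have := hw.three_le_length; omega)]
  set P : Finset (Fin L.length) := {i | L.get i ∈ w.edges.toFinset}
  have hP : #P = w.length := by
    rw [hL.card_filter_get_mem fun e he => w.edges_subset_edgeSet (List.mem_toFinset.1 he),
      List.toFinset_card_of_nodup hw.edges_nodup, w.length_edges]
  have hwindow (t : Fin L.length) : 2 * #{i ∈ P | (i - t).val < s} ≤ w.length - 1 := by
    have hM := hw.two_mul_card_le_length (M := {i ∈ P | (i - t).val < s}.image L.get)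
      (forall_mem_image.2 fun i hi => List.mem_toFinset.1 (mem_filter.1 (mem_filter.1 hi).1).2)
      (forall_mem_image.2 fun i hi => forall_mem_image.2 fun j hj =>
        not_edgesAdj_get_of_sub_val_lt hs (mem_filter.1 hi).2 (mem_filter.1 hj).2)
    rw [card_image_of_injective _ (List.nodup_iff_injective_get.1 hL.1)] at hM
    obtain ⟨k, hk⟩ := hodd
    omega
  calc s * (2 * w.length) = 2 * ∑ t : Fin L.length, #{i ∈ P | (i - t).val < s} := by
        rw [Fin.sum_card_filter_sub_val_lt hsn, hP]
        ring
    _ = ∑ t : Fin L.length, 2 * #{i ∈ P | (i - t).val < s} := mul_sum _ _ _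
    _ ≤ ∑ _t : Fin L.length, (w.length - 1) := sum_le_sum fun t _ => hwindow t
    _ = (w.length - 1) * L.length := by rw [sum_const, card_univ, Fintype.card_fin, smul_eq_mul,
          mul_comm]

theorem cms_le_of_isCycle {G : SimpleGraph V} {v : V} {w : G.Walk v v} (hw : w.IsCycle)
    (hodd : Odd w.length) : cms G ≤ (w.length - 1) * numEdges G / (2 * w.length) :=
  csSup_le' <| by
    rintro _ ⟨L, hL, rfl⟩
    exact hL.length_eq_numEdges ▸ cmsList_le_of_isCycle hL hw hodd

end

theorem cms_le_of_shortest_odd_cycle_general {V : Type*} (H : SimpleGraph V) (m : ℕ)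
    (hshort : ∃ (v : V) (w : H.Walk v v), w.IsCycle ∧ Odd w.length ∧ w.length = m) :
    (cms H : ℝ) ≤ ((m : ℝ) - 1) * (numEdges H : ℝ) / (2 * (m : ℝ)) := by
  obtain ⟨v, w, hw, hodd, rfl⟩ := hshort
  have hm : 1 ≤ w.length := hodd.pos
  calc (cms H : ℝ) ≤ ((w.length - 1) * numEdges H / (2 * w.length) : ℕ) :=
        Nat.cast_le.2 (cms_le_of_isCycle hw hodd)
    _ ≤ _ := Nat.cast_div_le.trans_eq (by push_cast [Nat.cast_sub hm]; rfl)

/-- Corollary: let `H` be a 2-regular class 2 graph (for a 2-regular graph this means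
chromatic index 3) whose shortest odd cycle has length `m`.  Then
`cms(H) ≤ (m-1)|E(H)|/(2m)`. -/
theorem cms_le_of_shortest_odd_cycle {V : Type*} [Fintype V] (H : SimpleGraph V) (m : ℕ)
    (hreg : IsRegularGraph H 2) (hclass2 : chromaticIndex H = 3)
    (hshort : ∃ (v : V) (w : H.Walk v v), w.IsCycle ∧ Odd w.length ∧ w.length = m)
    (hmin : ∀ (v : V) (w : H.Walk v v), w.IsCycle → Odd w.length → m ≤ w.length) :
    (cms H : ℝ) ≤ ((m : ℝ) - 1) * (numEdges H : ℝ) / (2 * (m : ℝ)) :=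
  cms_le_of_shortest_odd_cycle_general H m hshort
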